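/- arXiv:math/0503398 — 2 statements merged into one kernel-verified Lean document; each statement's English description precedes it below -/
import Mathlib

section
/- On F̂_{n+1} the following operator identities hold (with scalar multiples of maps taken in Maps(F̂_{n+1}, F̂_{n+1})): d_s ∘ τ − τ ∘ d_s = ρ·id; Δ_j ∘ τ − τ ∘ Δ_j = [1]·τ for every 1 ≤ j ≤ n; and d_s ∘ Δ_j − Δ_j ∘ d_s = ρ·d_s for every 1 ≤ j ≤ n. -/
/-!
Setting: `q = p ^ e`, `L` an algebraically closed field of characteristic `p`
containing `F_q(x)` (via the ring embedding `φ`), `root` the unique `q`-th root map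
on `L`.  `CIdx n` indexes the basis monomials `e(m, k₁, …, k_n)` (with
`m ≤ min(k₁, …, k_n)`) of the space `F̂_{n+1} = CIdx n →₀ L` of `F_q`-linear
polynomials; `tauOp`, `dsOp`, `deltaOp` are the operators `τ`, `d_s`, `Δ_j`, and
`monOp` is the monomial operator `τ^l ∘ d_s^μ ∘ Δ₁^{i₁} ∘ … ∘ Δ_n^{i_n}`.
-/

/-- Index set of the monomial basis `e(m, k₁, …, k_n)` with `m ≤ min(k₁, …, k_n)`. -/
def CIdx (n : ℕ) : Type := {v : ℕ × (Fin n → ℕ) // ∀ j, v.1 ≤ v.2 j}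

/-- `(m, k⃗) ↦ (m+1, k⃗+1)`. -/
def shiftUp {n : ℕ} (i : CIdx n) : CIdx n :=
  ⟨(i.1.1 + 1, fun j => i.1.2 j + 1), fun j => Nat.succ_le_succ (i.2 j)⟩

/-- `(m, k⃗) ↦ (m-1, k⃗-1)` (truncated subtraction). -/
def shiftDown {n : ℕ} (i : CIdx n) : CIdx n :=
  ⟨(i.1.1 - 1, fun j => i.1.2 j - 1), fun j => Nat.sub_le_sub_right (i.2 j) 1⟩

/-- The operator `τ` : `τ(a·e(m,k⃗)) = a^q · e(m+1, k⃗+1)`. -/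
noncomputable def tauOp (L : Type) [Field L] (q n : ℕ) :
    (CIdx n →₀ L) → (CIdx n →₀ L) :=
  fun f => f.sum fun i a => Finsupp.single (shiftUp i) (a ^ q)

/-- The Carlitz derivative `d_s` : `d_s(a·e(m,k⃗)) = a^{1/q}·[m]^{1/q}·e(m-1,k⃗-1)`
(which vanishes for `m = 0` since `[0] = x^{q^0} - x = 0` and `root 0 = 0`). -/
noncomputable def dsOp (L : Type) [Field L] (root : L → L) (x : L) (q n : ℕ) :
    (CIdx n →₀ L) → (CIdx n →₀ L) :=
  fun f => f.sum fun i a =>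
    Finsupp.single (shiftDown i) (root (x ^ q ^ i.1.1 - x) * root a)

/-- The operator `Δ_j` : `Δ_j(a·e(m,k⃗)) = [k_j]·a·e(m,k⃗)`. -/
noncomputable def deltaOp (L : Type) [Field L] (x : L) (q n : ℕ) (j : Fin n) :
    (CIdx n →₀ L) → (CIdx n →₀ L) :=
  fun f => f.sum fun i a => Finsupp.single i ((x ^ q ^ i.1.2 j - x) * a)

/-- The monomial operator `τ^l ∘ d_s^μ ∘ Δ₁^{i₁} ∘ … ∘ Δ_n^{i_n}`. -/
noncomputable def monOp (L : Type) [Field L] (root : L → L) (x : L) (q n : ℕ)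
    (l μ : ℕ) (iv : Fin n → ℕ) : (CIdx n →₀ L) → (CIdx n →₀ L) :=
  (tauOp L q n)^[l] ∘ (dsOp L root x q n)^[μ] ∘
    (List.ofFn fun j : Fin n => (deltaOp L x q n j)^[iv j]).foldr (· ∘ ·) id

/-!
Write `[m] = x^{q^m} - x` and `ρ = [1]^{1/q}`. All operators involved are additive (`τ` because
`c ↦ c^q` is, `d_s` because its inverse `c ↦ c^{1/q}` is), so each relation need only be checked
on a monomial `a·e(m, k⃗)`, where it becomes an identity between brackets. The identity behind all
three is `[m+1]^{1/q} = [m] + ρ`, which holds because `([m] + ρ)^q = (x^{q^{m+1}} - x^q) + [1]`.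
-/

section QPowAdditive

variable {L : Type} [Field L] {q : ℕ}

def qPowAddHom (hfrob : ∀ a b : L, (a + b) ^ q = a ^ q + b ^ q) : L →+ L :=
  AddMonoidHom.mk' (· ^ q) hfrob

lemma sub_pow_of_add_pow (hfrob : ∀ a b : L, (a + b) ^ q = a ^ q + b ^ q) (a b : L) :
    (a - b) ^ q = a ^ q - b ^ q :=
  map_sub (qPowAddHom hfrob) a b

lemma zero_pow_of_add_pow (hfrob : ∀ a b : L, (a + b) ^ q = a ^ q + b ^ q) : (0 : L) ^ q = 0 :=
  map_zero (qPowAddHom hfrob)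

variable {root : L → L}

lemma root_zero (hfrob : ∀ a b : L, (a + b) ^ q = a ^ q + b ^ q)
    (hroot2 : ∀ c, root (c ^ q) = c) : root 0 = 0 := by
  simpa only [zero_pow_of_add_pow hfrob] using hroot2 0

lemma root_add (hfrob : ∀ a b : L, (a + b) ^ q = a ^ q + b ^ q)
    (hroot1 : ∀ c, root c ^ q = c) (hroot2 : ∀ c, root (c ^ q) = c) (a b : L) :
    root (a + b) = root a + root b := by
  rw [← hroot2 (root a + root b), hfrob, hroot1, hroot1]

lemma root_mul (hroot1 : ∀ c, root c ^ q = c) (hroot2 : ∀ c, root (c ^ q) = c) (a b : L) :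
    root (a * b) = root a * root b := by
  rw [← hroot2 (root a * root b), mul_pow, hroot1, hroot1]

def rootAddHom (hfrob : ∀ a b : L, (a + b) ^ q = a ^ q + b ^ q)
    (hroot1 : ∀ c, root c ^ q = c) (hroot2 : ∀ c, root (c ^ q) = c) : L →+ L :=
  AddMonoidHom.mk' root (root_add hfrob hroot1 hroot2)

lemma root_pow_pow_succ_sub (hfrob : ∀ a b : L, (a + b) ^ q = a ^ q + b ^ q)
    (hroot1 : ∀ c, root c ^ q = c) (hroot2 : ∀ c, root (c ^ q) = c) (x : L) (m : ℕ) :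
    root (x ^ q ^ (m + 1) - x) = (x ^ q ^ m - x) + root (x ^ q - x) := by
  rw [← hroot2 (x ^ q ^ m - x + root (x ^ q - x)), hfrob, hroot1, sub_pow_of_add_pow hfrob,
    ← pow_mul, ← pow_succ]
  ring_nf

lemma pow_pow_succ_sub_sub_pow (hfrob : ∀ a b : L, (a + b) ^ q = a ^ q + b ^ q) (x : L) (k : ℕ) :
    x ^ q ^ (k + 1) - x - (x ^ q ^ k - x) ^ q = x ^ q - x := by
  rw [sub_pow_of_add_pow hfrob, ← pow_mul, ← pow_succ]
  ring

end QPowAdditive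

lemma shiftDown_shiftUp {n : ℕ} (i : CIdx n) : shiftDown (shiftUp i) = i :=
  Subtype.ext (by simp [shiftUp, shiftDown])

lemma shiftUp_shiftDown {n : ℕ} {i : CIdx n} (hi : 1 ≤ i.1.1) : shiftUp (shiftDown i) = i :=
  Subtype.ext <| Prod.ext (Nat.sub_add_cancel hi)
    (funext fun j => Nat.sub_add_cancel (hi.trans (i.2 j)))

lemma shiftUp_val_snd {n : ℕ} (i : CIdx n) (j : Fin n) : (shiftUp i).1.2 j = i.1.2 j + 1 := rfl

lemma shiftDown_val_snd {n : ℕ} (i : CIdx n) (j : Fin n) :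
    (shiftDown i).1.2 j = i.1.2 j - 1 := rfl

section Operators

variable {L : Type} [Field L] {q n : ℕ} {root : L → L}

noncomputable def tauHom (hfrob : ∀ a b : L, (a + b) ^ q = a ^ q + b ^ q) :
    (CIdx n →₀ L) →+ (CIdx n →₀ L) :=
  Finsupp.liftAddHom fun i => (Finsupp.singleAddHom (shiftUp i)).comp (qPowAddHom hfrob)

noncomputable def dsHom (hfrob : ∀ a b : L, (a + b) ^ q = a ^ q + b ^ q)
    (hroot1 : ∀ c, root c ^ q = c) (hroot2 : ∀ c, root (c ^ q) = c) (x : L) :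
    (CIdx n →₀ L) →+ (CIdx n →₀ L) :=
  Finsupp.liftAddHom fun i => (Finsupp.singleAddHom (shiftDown i)).comp
    ((AddMonoidHom.mulLeft (root (x ^ q ^ i.1.1 - x))).comp (rootAddHom hfrob hroot1 hroot2))

noncomputable def deltaHom (q : ℕ) (x : L) (j : Fin n) : (CIdx n →₀ L) →+ (CIdx n →₀ L) :=
  Finsupp.liftAddHom fun i => (Finsupp.singleAddHom i).comp
    (AddMonoidHom.mulLeft (x ^ q ^ i.1.2 j - x))

lemma coe_tauHom (hfrob : ∀ a b : L, (a + b) ^ q = a ^ q + b ^ q) :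
    ⇑(tauHom hfrob : (CIdx n →₀ L) →+ _) = tauOp L q n := rfl

lemma coe_dsHom (hfrob : ∀ a b : L, (a + b) ^ q = a ^ q + b ^ q)
    (hroot1 : ∀ c, root c ^ q = c) (hroot2 : ∀ c, root (c ^ q) = c) (x : L) :
    ⇑(dsHom hfrob hroot1 hroot2 x : (CIdx n →₀ L) →+ _) = dsOp L root x q n := rfl

lemma coe_deltaHom (x : L) (j : Fin n) : ⇑(deltaHom q x j) = deltaOp L x q n j := rfl

lemma tauOp_single (hfrob : ∀ a b : L, (a + b) ^ q = a ^ q + b ^ q) (i : CIdx n) (a : L) :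
    tauOp L q n (Finsupp.single i a) = Finsupp.single (shiftUp i) (a ^ q) :=
  Finsupp.sum_single_index (by rw [zero_pow_of_add_pow hfrob, Finsupp.single_zero])

lemma dsOp_single (hfrob : ∀ a b : L, (a + b) ^ q = a ^ q + b ^ q)
    (hroot2 : ∀ c, root (c ^ q) = c) (x : L) (i : CIdx n) (a : L) :
    dsOp L root x q n (Finsupp.single i a) =
      Finsupp.single (shiftDown i) (root (x ^ q ^ i.1.1 - x) * root a) :=
  Finsupp.sum_single_index (by rw [root_zero hfrob hroot2, mul_zero, Finsupp.single_zero])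

lemma deltaOp_single (x : L) (j : Fin n) (i : CIdx n) (a : L) :
    deltaOp L x q n j (Finsupp.single i a) = Finsupp.single i ((x ^ q ^ i.1.2 j - x) * a) :=
  Finsupp.sum_single_index (by rw [mul_zero, Finsupp.single_zero])

lemma dsOp_tauOp_single (hfrob : ∀ a b : L, (a + b) ^ q = a ^ q + b ^ q)
    (hroot2 : ∀ c, root (c ^ q) = c) (x : L) (i : CIdx n) (a : L) :
    dsOp L root x q n (tauOp L q n (Finsupp.single i a)) =
      Finsupp.single i (root (x ^ q ^ (i.1.1 + 1) - x) * a) := by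
  rw [tauOp_single hfrob, dsOp_single hfrob hroot2, shiftDown_shiftUp, hroot2]
  rfl

lemma tauOp_dsOp_single (hfrob : ∀ a b : L, (a + b) ^ q = a ^ q + b ^ q)
    (hroot1 : ∀ c, root c ^ q = c) (hroot2 : ∀ c, root (c ^ q) = c) (x : L)
    (i : CIdx n) (a : L) :
    tauOp L q n (dsOp L root x q n (Finsupp.single i a)) =
      Finsupp.single i ((x ^ q ^ i.1.1 - x) * a) := by
  rw [dsOp_single hfrob hroot2, tauOp_single hfrob, mul_pow, hroot1, hroot1]
  -- For `m = 0` the truncated `shiftDown` is not undone by `shiftUp`, but then `[0] = 0`.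
  rcases Nat.eq_zero_or_pos i.1.1 with hm | hm
  · simp [hm]
  · rw [shiftUp_shiftDown hm]

theorem dsOp_comp_tauOp_sub (hfrob : ∀ a b : L, (a + b) ^ q = a ^ q + b ^ q)
    (hroot1 : ∀ c, root c ^ q = c) (hroot2 : ∀ c, root (c ^ q) = c) (x : L) :
    dsOp L root x q n ∘ tauOp L q n - tauOp L q n ∘ dsOp L root x q n =
      root (x ^ q - x) • id := by
  have key : (dsHom hfrob hroot1 hroot2 x).comp (tauHom hfrob) -
      (tauHom hfrob).comp (dsHom hfrob hroot1 hroot2 x) =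
      root (x ^ q - x) • AddMonoidHom.id (CIdx n →₀ L) := by
    refine Finsupp.addHom_ext fun i a => ?_
    simp only [AddMonoidHom.sub_apply, AddMonoidHom.comp_apply, coe_tauHom, coe_dsHom,
      AddMonoidHom.smul_apply, AddMonoidHom.id_apply, dsOp_tauOp_single hfrob hroot2,
      tauOp_dsOp_single hfrob hroot1 hroot2, root_pow_pow_succ_sub hfrob hroot1 hroot2,
      Finsupp.smul_single, smul_eq_mul, ← Finsupp.single_sub]
    ring_nf
  exact congrArg DFunLike.coe key

theorem deltaOp_comp_tauOp_sub (hfrob : ∀ a b : L, (a + b) ^ q = a ^ q + b ^ q) (x : L)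
    (j : Fin n) :
    deltaOp L x q n j ∘ tauOp L q n - tauOp L q n ∘ deltaOp L x q n j =
      (x ^ q - x) • tauOp L q n := by
  have key : (deltaHom q x j).comp (tauHom hfrob) - (tauHom hfrob).comp (deltaHom q x j) =
      (x ^ q - x) • tauHom hfrob := by
    refine Finsupp.addHom_ext fun i a => ?_
    simp only [AddMonoidHom.sub_apply, AddMonoidHom.comp_apply, AddMonoidHom.smul_apply,
      coe_tauHom, coe_deltaHom, tauOp_single hfrob, deltaOp_single, Finsupp.smul_single,
      smul_eq_mul, ← Finsupp.single_sub, mul_pow, shiftUp_val_snd]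
    rw [← pow_pow_succ_sub_sub_pow hfrob x (i.1.2 j)]
    ring_nf
  exact congrArg DFunLike.coe key

theorem dsOp_comp_deltaOp_sub (hfrob : ∀ a b : L, (a + b) ^ q = a ^ q + b ^ q)
    (hroot1 : ∀ c, root c ^ q = c) (hroot2 : ∀ c, root (c ^ q) = c) (x : L) (j : Fin n) :
    dsOp L root x q n ∘ deltaOp L x q n j - deltaOp L x q n j ∘ dsOp L root x q n =
      root (x ^ q - x) • dsOp L root x q n := by
  have key : (dsHom hfrob hroot1 hroot2 x).comp (deltaHom q x j) -
      (deltaHom q x j).comp (dsHom hfrob hroot1 hroot2 x) =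
      root (x ^ q - x) • dsHom hfrob hroot1 hroot2 x := by
    refine Finsupp.addHom_ext fun i a => ?_
    simp only [AddMonoidHom.sub_apply, AddMonoidHom.comp_apply, AddMonoidHom.smul_apply,
      coe_dsHom, coe_deltaHom, dsOp_single hfrob hroot2, deltaOp_single, Finsupp.smul_single,
      smul_eq_mul, ← Finsupp.single_sub, root_mul hroot1 hroot2, shiftDown_val_snd]
    congr 1
    rcases Nat.eq_zero_or_pos (i.1.2 j) with hk | hk
    · have hm : i.1.1 = 0 := Nat.eq_zero_of_le_zero (hk ▸ i.2 j)
      simp [hm, root_zero hfrob hroot2]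
    · obtain ⟨k, hk⟩ := Nat.exists_eq_add_of_lt hk
      rw [hk, zero_add, root_pow_pow_succ_sub hfrob hroot1 hroot2, Nat.add_sub_cancel]
      ring
  exact congrArg DFunLike.coe key

end Operators

theorem carlitz_commutation_relations_general
    (p e q : ℕ) [Fact p.Prime] (hq : q = p ^ e)
    (L : Type) [Field L] [CharP L p]
    (root : L → L) (hroot1 : ∀ c, root c ^ q = c) (hroot2 : ∀ c, root (c ^ q) = c)
    (n : ℕ) (x : L) :
    (dsOp L root x q n ∘ tauOp L q n - tauOp L q n ∘ dsOp L root x q n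
        = root (x ^ q - x) • (id : (CIdx n →₀ L) → (CIdx n →₀ L))) ∧
    (∀ j : Fin n, deltaOp L x q n j ∘ tauOp L q n - tauOp L q n ∘ deltaOp L x q n j
        = (x ^ q - x) • tauOp L q n) ∧
    (∀ j : Fin n, dsOp L root x q n ∘ deltaOp L x q n j
        - deltaOp L x q n j ∘ dsOp L root x q n
        = root (x ^ q - x) • dsOp L root x q n) := by
  have hfrob : ∀ a b : L, (a + b) ^ q = a ^ q + b ^ q := hq ▸ fun a b => add_pow_char_pow a b p e
  exact ⟨dsOp_comp_tauOp_sub hfrob hroot1 hroot2 x, deltaOp_comp_tauOp_sub hfrob x,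
    dsOp_comp_deltaOp_sub hfrob hroot1 hroot2 x⟩

/-- **Commutation relations in the Carlitz ring (relations (4) and (9)).**
With `ρ = [1]^{1/q}`: `d_s∘τ − τ∘d_s = ρ·id`, `Δ_j∘τ − τ∘Δ_j = [1]·τ`, and
`d_s∘Δ_j − Δ_j∘d_s = ρ·d_s` for every `j`. -/
theorem carlitz_commutation_relations
    (p e q : ℕ) [Fact p.Prime] (he : 0 < e) (hq : q = p ^ e)
    (L : Type) [Field L] [IsAlgClosed L] [CharP L p]
    (φ : RatFunc (GaloisField p e) →+* L)
    (root : L → L) (hroot1 : ∀ c, root c ^ q = c) (hroot2 : ∀ c, root (c ^ q) = c)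
    (n : ℕ) (x : L) (hx : x = φ RatFunc.X) :
    (dsOp L root x q n ∘ tauOp L q n - tauOp L q n ∘ dsOp L root x q n
        = root (x ^ q - x) • (id : (CIdx n →₀ L) → (CIdx n →₀ L))) ∧
    (∀ j : Fin n, deltaOp L x q n j ∘ tauOp L q n - tauOp L q n ∘ deltaOp L x q n j
        = (x ^ q - x) • tauOp L q n) ∧
    (∀ j : Fin n, dsOp L root x q n ∘ deltaOp L x q n j
        - deltaOp L x q n j ∘ dsOp L root x q n
        = root (x ^ q - x) • dsOp L root x q n) :=
  carlitz_commutation_relations_general p e q hq L root hroot1 hroot2 n x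
end

section
/- (Pascal-type identity for K-binomial coefficients.) For all integers k ≥ 1 and 0 ≤ m ≤ k, the identity binom(k,m)_K = binom(k−1,m−1)_K^q + binom(k−1,m)_K^q · D_m^{q−1} holds in F_q(x), where by convention binom(k−1,−1)_K = 0 and binom(k−1,k)_K = 0. -/
noncomputable section

open Polynomial

/-- The Carlitz factorial `D_i = [i]·[i-1]^q ⋯ [1]^{q^{i-1}} ∈ F_q[x]`
(where `[i] = x^{q^i} - x`), defined via `D_0 = 1`, `D_{i+1} = [i+1]·D_i^q`. -/
def Dcar (q : ℕ) (F : Type) [Field F] : ℕ → Polynomial F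
  | 0 => 1
  | i + 1 => (X ^ q ^ (i + 1) - X) * (Dcar q F i) ^ q

/-- `L_i = [i]·[i-1] ⋯ [1] ∈ F_q[x]`, via `L_0 = 1`, `L_{i+1} = [i+1]·L_i`. -/
def Lcar (q : ℕ) (F : Type) [Field F] : ℕ → Polynomial F
  | 0 => 1
  | i + 1 => (X ^ q ^ (i + 1) - X) * Lcar q F i

/-- The `K`-binomial coefficient `binom(k,m)_K = D_k/(D_m · D_{k-m}^{q^m}) ∈ F_q(x)`
for `0 ≤ m ≤ k`, with the convention that it vanishes for `m < 0` or `m > k`. -/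
def Kb (q : ℕ) (F : Type) [Field F] (k : ℕ) (m : ℤ) : RatFunc F :=
  if 0 ≤ m ∧ m ≤ (k : ℤ) then
    algebraMap (Polynomial F) (RatFunc F) (Dcar q F k) /
      (algebraMap (Polynomial F) (RatFunc F) (Dcar q F m.toNat) *
        algebraMap (Polynomial F) (RatFunc F) (Dcar q F (k - m.toNat)) ^ q ^ m.toNat)
  else 0

/-- The `π`-adic additive valuation `v_π` on `F_q(x)`, normalized by `v_π(π) = 1`
(for `π` irreducible): the multiplicity of `π` in the numerator minus the
multiplicity of `π` in the denominator. -/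
def vpol {F : Type} [Field F] (π : Polynomial F) (t : RatFunc F) : ℤ :=
  (multiplicity π t.num : ℤ) - (multiplicity π t.denom : ℤ)

/-! Multiply the identity by `[k] ≠ 0`. The recursion `D_{i+1} = [i+1]·D_i^q` turns the two terms
on the right into `[m]·binom(k,m)_K` and `[k-m]^{q^m}·binom(k,m)_K`, and these add up to
`[k]·binom(k,m)_K` because Frobenius gives `[k] = [m] + [k-m]^{q^m}`. Both reductions also hold at
`m = 0` and `m = k`, where the vanishing `K`-binomial is matched by `[0] = 0`. -/

def carlitzBracket (q : ℕ) (F : Type) [Field F] (i : ℕ) : F[X] := X ^ q ^ i - X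

section Carlitz

variable {q : ℕ} {F : Type} [Field F]

local notation "φ" => algebraMap F[X] (RatFunc F)

@[simp]
lemma carlitzBracket_zero : carlitzBracket q F 0 = 0 := by
  simp [carlitzBracket]

lemma carlitzBracket_ne_zero (hq : 1 < q) {i : ℕ} (hi : i ≠ 0) : carlitzBracket q F i ≠ 0 :=
  FiniteField.X_pow_card_pow_sub_X_ne_zero F hi hq

lemma carlitzBracket_add {p e : ℕ} [ExpChar F p] (hq : q = p ^ e) (m n : ℕ) :
    carlitzBracket q F (m + n) = carlitzBracket q F m + carlitzBracket q F n ^ q ^ m := by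
  have hqm : q ^ m = p ^ (e * m) := by rw [hq, pow_mul]
  have hfrob : carlitzBracket q F n ^ q ^ m = X ^ q ^ (m + n) - X ^ q ^ m := by
    rw [carlitzBracket, hqm, sub_pow_expChar_pow, ← hqm, ← pow_mul, ← pow_add, add_comm n]
  rw [hfrob, carlitzBracket, carlitzBracket]
  ring

lemma Dcar_succ (i : ℕ) : Dcar q F (i + 1) = carlitzBracket q F (i + 1) * Dcar q F i ^ q := rfl

lemma Dcar_ne_zero (hq : 1 < q) : ∀ i, Dcar q F i ≠ 0
  | 0 => one_ne_zero
  | i + 1 => by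
    rw [Dcar_succ]
    exact mul_ne_zero (carlitzBracket_ne_zero hq i.succ_ne_zero) (pow_ne_zero _ (Dcar_ne_zero hq i))

lemma Kb_natCast_of_le {k m : ℕ} (h : m ≤ k) :
    Kb q F k m = φ (Dcar q F k) / (φ (Dcar q F m) * φ (Dcar q F (k - m)) ^ q ^ m) := by
  rw [Kb, if_pos ⟨m.cast_nonneg, by exact_mod_cast h⟩, Int.toNat_natCast]

lemma Kb_natCast_of_lt {k m : ℕ} (h : k < m) : Kb q F k m = 0 := by
  rw [Kb, if_neg]
  omega

lemma Kb_of_neg {k : ℕ} {m : ℤ} (h : m < 0) : Kb q F k m = 0 := by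
  rw [Kb, if_neg]
  omega

lemma carlitzBracket_mul_Kb_sub_one_pow (hq : 1 < q) {k m : ℕ} (hm : m ≤ k + 1) :
    φ (carlitzBracket q F (k + 1)) * Kb q F k (m - 1) ^ q
      = φ (carlitzBracket q F m) * Kb q F (k + 1) m := by
  obtain _ | j := m
  · simp [Kb_of_neg, zero_pow (by omega : q ≠ 0)]
  rw [show ((j + 1 : ℕ) : ℤ) - 1 = j by push_cast; ring, Kb_natCast_of_le (by omega),
    Kb_natCast_of_le (by omega), Nat.add_sub_add_right, Dcar_succ k, Dcar_succ j]
  simp only [map_mul, map_pow, div_pow, mul_pow, ← pow_mul, ← pow_succ]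
  have hbracket := RatFunc.algebraMap_ne_zero (carlitzBracket_ne_zero (F := F) hq j.succ_ne_zero)
  have hDj := RatFunc.algebraMap_ne_zero (Dcar_ne_zero (F := F) hq j)
  have hDkj := RatFunc.algebraMap_ne_zero (Dcar_ne_zero (F := F) hq (k - j))
  field_simp

lemma carlitzBracket_mul_Kb_pow_mul_Dcar_pow (hq : 1 < q) {k m : ℕ} (hm : m ≤ k + 1) :
    φ (carlitzBracket q F (k + 1)) * (Kb q F k m ^ q * φ (Dcar q F m) ^ (q - 1))
      = φ (carlitzBracket q F (k + 1 - m)) ^ q ^ m * Kb q F (k + 1) m := by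
  obtain hmk | rfl := hm.lt_or_eq
  · obtain ⟨s, hs⟩ : ∃ s, k = m + s := Nat.exists_eq_add_of_le (by omega)
    obtain ⟨r, rfl⟩ : ∃ r, q = r + 1 := ⟨q - 1, by omega⟩
    rw [Kb_natCast_of_le (by omega), Kb_natCast_of_le (by omega), Nat.add_sub_cancel,
      show k + 1 - m = s + 1 by omega, show k - m = s by omega, Dcar_succ k, Dcar_succ s]
    simp only [map_mul, map_pow, div_pow, mul_pow, ← pow_mul, ← pow_succ]
    have hbracket := RatFunc.algebraMap_ne_zero (carlitzBracket_ne_zero (F := F) hq s.succ_ne_zero)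
    have hDm := RatFunc.algebraMap_ne_zero (Dcar_ne_zero (F := F) hq m)
    have hDs := RatFunc.algebraMap_ne_zero (Dcar_ne_zero (F := F) hq s)
    field_simp
    ring
  · rw [Kb_natCast_of_lt k.lt_succ_self, Nat.sub_self, carlitzBracket_zero, map_zero,
      zero_pow (pow_ne_zero _ (by omega)), zero_pow (by omega), zero_mul, zero_mul, mul_zero]

end Carlitz

/-- **Pascal-type identity for `K`-binomial coefficients (Proposition 5).**
For `k ≥ 1` and `0 ≤ m ≤ k`,
`binom(k,m)_K = binom(k−1,m−1)_K^q + binom(k−1,m)_K^q · D_m^{q−1}`,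
with the conventions `binom(k−1,−1)_K = 0` and `binom(k−1,k)_K = 0`
(built into the definition of `Kb`). -/
theorem Kbinom_pascal
    (p e q : ℕ) [Fact p.Prime] (he : 0 < e) (hq : q = p ^ e)
    (k : ℕ) (hk : 1 ≤ k) (m : ℤ) (hm0 : 0 ≤ m) (hmk : m ≤ (k : ℤ)) :
    Kb q (GaloisField p e) k m
      = Kb q (GaloisField p e) (k - 1) (m - 1) ^ q
        + Kb q (GaloisField p e) (k - 1) m ^ q *
          algebraMap (Polynomial (GaloisField p e)) (RatFunc (GaloisField p e))
            (Dcar q (GaloisField p e) m.toNat) ^ (q - 1) := by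
  have hq1 : 1 < q := hq ▸ Nat.one_lt_pow he.ne' (Fact.out : p.Prime).one_lt
  lift m to ℕ using hm0
  obtain ⟨n, rfl⟩ : ∃ n, k = n + 1 := ⟨k - 1, by omega⟩
  have hmn : m ≤ n + 1 := by exact_mod_cast hmk
  refine mul_left_cancel₀
    (RatFunc.algebraMap_ne_zero (carlitzBracket_ne_zero hq1 n.add_one_ne_zero)) ?_
  rw [Nat.add_sub_cancel, Int.toNat_natCast, mul_add, carlitzBracket_mul_Kb_sub_one_pow hq1 hmn,
    carlitzBracket_mul_Kb_pow_mul_Dcar_pow hq1 hmn, ← add_mul, ← map_pow, ← map_add,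
    ← carlitzBracket_add hq, Nat.add_sub_cancel' hmn]
end
end
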